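/- arXiv:1609.04144 — 4 statements merged into one kernel-verified Lean document; each statement's English description precedes it below -/
import Mathlib

section
/- The conditional von Neumann entropy S(A|B) = S(ρ_W(α)) - S(Tr_A ρ_W(α)) of the Werner state is a strictly decreasing function of α on [0,1], is positive at α = 1/√2 and negative at α = 1; hence there is a unique α₀ ∈ (1/√2, 1) where it vanishes, satisfying 3(1-α₀)log₂(1-α₀) + (1+3α₀)log₂(1+3α₀) = 4. -/
open Matrix Kronecker Complex
open scoped ComplexOrder

noncomputable section

/-- Pauli matrices -/
def pauli : Fin 3 → Matrix (Fin 2) (Fin 2) ℂ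
  | 0 => !![0, 1; 1, 0]
  | 1 => !![0, -Complex.I; Complex.I, 0]
  | 2 => !![1, 0; 0, -1]

/-- The singlet Bell state |Ψ⁻⟩ = (|01⟩ - |10⟩)/√2 as a vector in ℂ²⊗ℂ². -/
def psiMinus : Fin 2 × Fin 2 → ℂ :=
  fun p => if p = (0, 1) then (1 / Real.sqrt 2 : ℝ) else
           if p = (1, 0) then (-(1 / Real.sqrt 2) : ℝ) else 0

/-- Outer product |v⟩⟨v|. -/
def outer {n : Type*} (v : n → ℂ) : Matrix n n ℂ :=
  fun i j => v i * starRingEnd ℂ (v j)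

/-- The Werner state ρ_W(α) = α|Ψ⁻⟩⟨Ψ⁻| + (1-α)/4 · I₄. -/
def wernerState (α : ℝ) : Matrix (Fin 2 × Fin 2) (Fin 2 × Fin 2) ℂ :=
  (α : ℂ) • outer psiMinus + (((1 - α) / 4 : ℝ) : ℂ) • (1 : Matrix (Fin 2 × Fin 2) (Fin 2 × Fin 2) ℂ)

/-- Partial trace over the first subsystem. -/
def ptrA {m n : Type*} [Fintype m] (ρ : Matrix (m × n) (m × n) ℂ) : Matrix n n ℂ :=
  fun i j => ∑ k, ρ (k, i) (k, j)

/-- Partial trace over the second subsystem. -/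
def ptrB {m n : Type*} [Fintype n] (ρ : Matrix (m × n) (m × n) ℂ) : Matrix m m ℂ :=
  fun i j => ∑ k, ρ (i, k) (j, k)

/-- Partial transpose on the second subsystem. -/
def ptransposeB {m n : Type*} (ρ : Matrix (m × n) (m × n) ℂ) : Matrix (m × n) (m × n) ℂ :=
  fun p q => ρ (p.1, q.2) (q.1, p.2)

/-- A density operator: positive semi-definite with unit trace. -/
def IsDensityOp {n : Type*} [Fintype n] [DecidableEq n] (ρ : Matrix n n ℂ) : Prop :=
  ρ.PosSemidef ∧ ρ.trace = 1

/-- Separability of a bipartite state: a convex combination of product density operators. -/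
def IsSepState {m n : Type*} [Fintype m] [Fintype n] [DecidableEq m] [DecidableEq n]
    (ρ : Matrix (m × n) (m × n) ℂ) : Prop :=
  ∃ (k : ℕ) (p : Fin k → ℝ) (A : Fin k → Matrix m m ℂ) (B : Fin k → Matrix n n ℂ),
    (∀ i, 0 ≤ p i) ∧ (∑ i, p i = 1) ∧
    (∀ i, IsDensityOp (A i)) ∧ (∀ i, IsDensityOp (B i)) ∧
    ρ = ∑ i, ((p i : ℂ)) • (A i ⊗ₖ B i)

/-- A Hermitian matrix has a negative eigenvalue. -/
def HasNegEigenvalue {n : Type*} [Fintype n] [DecidableEq n] (M : Matrix n n ℂ) : Prop :=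
  ∃ (h : M.IsHermitian) (i : n), h.eigenvalues i < 0

/-- Von Neumann entropy (base-2) of a matrix, via its eigenvalues (0 for non-Hermitian input). -/
def vNEntropy {n : Type*} [Fintype n] [DecidableEq n] (ρ : Matrix n n ℂ) : ℝ :=
  if h : ρ.IsHermitian then ∑ i, -(h.eigenvalues i) * Real.logb 2 (h.eigenvalues i) else 0


/-- Weyl (locally maximally mixed) two-qubit state with correlation coefficients t. -/
def weylState (t : Fin 3 → ℝ) : Matrix (Fin 2 × Fin 2) (Fin 2 × Fin 2) ℂ :=
  (1/4 : ℂ) • ((1 : Matrix (Fin 2 × Fin 2) (Fin 2 × Fin 2) ℂ) +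
    ∑ i, (t i : ℂ) • (pauli i ⊗ₖ pauli i))

/-- Matrix function via the continuous functional calculus (0 for non-Hermitian input). -/
def mfun {n : Type*} [Fintype n] [DecidableEq n] (f : ℝ → ℝ) (M : Matrix n n ℂ) :
    Matrix n n ℂ :=
  if h : M.IsHermitian then h.cfc f else 0

/-- Base-2 logarithm extended by 0 outside the support. -/
def log2supp (x : ℝ) : ℝ := if 0 < x then Real.logb 2 x else 0

/-- The Cerf–Adami conditional amplitude operator ρ_{A|B} = exp₂(log₂ ρ - log₂ (1 ⊗ ρ_B)). -/
def condAmpOp {m n : Type*} [Fintype m] [Fintype n] [DecidableEq m] [DecidableEq n]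
    (ρ : Matrix (m × n) (m × n) ℂ) : Matrix (m × n) (m × n) ℂ :=
  mfun (fun x => (2 : ℝ) ^ x)
    (mfun log2supp ρ - mfun log2supp ((1 : Matrix m m ℂ) ⊗ₖ ptrA ρ))

/-- The spin-flipped state σ_y⊗σ_y ρ* σ_y⊗σ_y. -/
def spinFlip (ρ : Matrix (Fin 2 × Fin 2) (Fin 2 × Fin 2) ℂ) :
    Matrix (Fin 2 × Fin 2) (Fin 2 × Fin 2) ℂ :=
  (pauli 1 ⊗ₖ pauli 1) * ρ.map (starRingEnd ℂ) * (pauli 1 ⊗ₖ pauli 1)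

/-- The Wootters concurrence of a two-qubit state ρ equals c: the λᵢ are the decreasingly
ordered (nonnegative) eigenvalues of ρ ρ̃ and c = max{0, √λ₁ - √λ₂ - √λ₃ - √λ₄}. -/
def ConcurrenceEq (ρ : Matrix (Fin 2 × Fin 2) (Fin 2 × Fin 2) ℂ) (c : ℝ) : Prop :=
  ∃ l : Fin 4 → ℝ, Antitone l ∧ (∀ i, 0 ≤ l i) ∧
    (ρ * spinFlip ρ).charpoly = ∏ i : Fin 4, (Polynomial.X - Polynomial.C ((l i : ℝ) : ℂ)) ∧
    c = max 0 (Real.sqrt (l 0) - Real.sqrt (l 1) - Real.sqrt (l 2) - Real.sqrt (l 3))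

/-- The state |ψ_θ⟩ = sin θ |01⟩ + cos θ |10⟩. -/
def psiTheta (θ : ℝ) : Fin 2 × Fin 2 → ℂ :=
  fun p => if p = (0, 1) then (Real.sin θ : ℝ) else
           if p = (1, 0) then (Real.cos θ : ℝ) else 0

/-- The state ρ_top = (|00⟩⟨00| + |11⟩⟨11|)/2. -/
def rhoTop : Matrix (Fin 2 × Fin 2) (Fin 2 × Fin 2) ℂ :=
  Matrix.diagonal (fun p => if p.1 = p.2 then (1/2 : ℂ) else 0)

/-- The Gisin state ρ_G(λ,θ) = λ|ψ_θ⟩⟨ψ_θ| + (1-λ) ρ_top. -/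
def gisinState (lam θ : ℝ) : Matrix (Fin 2 × Fin 2) (Fin 2 × Fin 2) ℂ :=
  (lam : ℂ) • outer (psiTheta θ) + ((1 - lam : ℝ) : ℂ) • rhoTop

/-- The Bell state |Ψ⁺⟩ = (|01⟩ + |10⟩)/√2. -/
def psiPlus : Fin 2 × Fin 2 → ℂ :=
  fun p => if p = (0, 1) then (1 / Real.sqrt 2 : ℝ) else
           if p = (1, 0) then (1 / Real.sqrt 2 : ℝ) else 0

/-- The entanglement witness W = (1/(2√3))(I + ∑ σₙ⊗σₙ). -/
def witnessW : Matrix (Fin 2 × Fin 2) (Fin 2 × Fin 2) ℂ :=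
  ((1 / (2 * Real.sqrt 3) : ℝ) : ℂ) •
    ((1 : Matrix (Fin 2 × Fin 2) (Fin 2 × Fin 2) ℂ) + ∑ i, pauli i ⊗ₖ pauli i)

/-- Conditional entropy S(A|B) of the Werner state. -/
noncomputable def wernerCondEntropy (α : ℝ) : ℝ :=
  vNEntropy (wernerState α) - vNEntropy (ptrA (wernerState α))

/-! With `P = |Ψ⁻⟩⟨Ψ⁻|` a projection, `ρ_W(α) = α P + (1 - α)/4 · 1` satisfies
`(ρ_W - a)(ρ_W - b) = 0` for `a = (1 + 3α)/4` and `b = (1 - α)/4`, so every eigenvalue is `a` or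
`b`, and the trace forces the multiplicities `1` and `3`. Hence `S(ρ_W(α))` is, in bits, the
`4`-ary entropy of `p = 3(1 - α)/4`, which increases strictly on `[0, 3/4]`, while the reduced
state is `I₂/2`. The sign at `1/√2` comes from monotonicity and the rational point `18/25`,
where it reduces to `(7/25)^21 (79/25)^79 < 2^100`; the intermediate value theorem gives the
zero and strict monotonicity its uniqueness. -/

open Polynomial

theorem Fintype.exists_sum_comp_eq_of_forall_eq_or_eq {ι α M : Type*} [Fintype ι]
    [AddCommMonoid M] {x : ι → α} {a b : α} (h : ∀ i, x i = a ∨ x i = b) :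
    ∃ k ≤ Fintype.card ι, ∀ g : α → M, ∑ i, g (x i) = k • g a + (Fintype.card ι - k) • g b := by
  classical
  refine ⟨(Finset.univ.filter (fun i => x i = a)).card, Finset.card_le_univ _, fun g => ?_⟩
  have hcard := Finset.card_filter_add_card_filter_not (s := Finset.univ) (fun i => x i = a)
  rw [← Finset.sum_filter_add_sum_filter_not Finset.univ (fun i => x i = a),
    Finset.sum_congr rfl fun i hi => congrArg g (Finset.mem_filter.1 hi).2,
    Finset.sum_congr rfl fun i hi => congrArg g ((h i).resolve_left (Finset.mem_filter.1 hi).2),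
    Finset.sum_const, Finset.sum_const, ← Finset.card_univ, ← hcard, Nat.add_sub_cancel_left]

theorem neg_mul_logb_two (x : ℝ) : -x * Real.logb 2 x = Real.negMulLog x / Real.log 2 := by
  rw [Real.negMulLog, Real.logb]; ring

section Hermitian

variable {n : Type*} [Fintype n] [DecidableEq n]

theorem Matrix.IsHermitian.eval_eigenvalues_eq_zero {A : Matrix n n ℂ} (hA : A.IsHermitian)
    {p : ℝ[X]} (hp : aeval A p = 0) (i : n) :
    p.eval (hA.eigenvalues i) = 0 := by
  have : Nonempty n := ⟨i⟩
  simpa [hp, spectrum.zero_eq] using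
    spectrum.subset_polynomial_aeval A p ⟨_, hA.eigenvalues_mem_spectrum_real i, rfl⟩

theorem Matrix.IsHermitian.eigenvalues_eq_or_eq {A : Matrix n n ℂ} (hA : A.IsHermitian) {a b : ℝ}
    (h : (A - (a : ℂ) • 1) * (A - (b : ℂ) • 1) = 0) (i : n) :
    hA.eigenvalues i = a ∨ hA.eigenvalues i = b := by
  have := hA.eval_eigenvalues_eq_zero (p := (X - C a) * (X - C b)) (by
    simpa [Algebra.algebraMap_eq_smul_one, ← Complex.coe_smul] using h) i
  simpa [sub_eq_zero] using this

theorem vNEntropy_smul_one (c : ℝ) :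
    vNEntropy ((c : ℂ) • (1 : Matrix n n ℂ)) = Fintype.card n * (-c * Real.logb 2 c) := by
  have hH : ((c : ℂ) • (1 : Matrix n n ℂ)).IsHermitian :=
    Matrix.isHermitian_one.smul (Complex.conj_ofReal c)
  have hc i : hH.eigenvalues i = c := by
    simpa using hH.eigenvalues_eq_or_eq (a := c) (b := c) (by simp) i
  rw [vNEntropy, dif_pos hH]
  simp [hc]

end Hermitian

theorem outer_mul_outer_self {n : Type*} [Fintype n] (v : n → ℂ) :
    outer v * outer v = (∑ k, v k * starRingEnd ℂ (v k)) • outer v := by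
  ext i j
  simp only [Matrix.mul_apply, Matrix.smul_apply, outer, smul_eq_mul, Finset.sum_mul]
  exact Finset.sum_congr rfl fun k _ => by ring

theorem outer_isHermitian {n : Type*} (v : n → ℂ) : (outer v).IsHermitian := by
  ext i j
  simp [outer, mul_comm]

theorem ofReal_sqrt_two_inv_mul_self :
    ((Real.sqrt 2 : ℂ))⁻¹ * ((Real.sqrt 2 : ℂ))⁻¹ = 1 / 2 := by
  rw [← mul_inv, ← Complex.ofReal_mul, Real.mul_self_sqrt zero_le_two]
  norm_num

theorem sum_mul_conj_psiMinus : ∑ p, psiMinus p * starRingEnd ℂ (psiMinus p) = 1 := by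
  norm_num [psiMinus, Fintype.sum_prod_type, ofReal_sqrt_two_inv_mul_self]

theorem wernerState_isHermitian (α : ℝ) : (wernerState α).IsHermitian :=
  ((outer_isHermitian psiMinus).smul (Complex.conj_ofReal α)).add
    (Matrix.isHermitian_one.smul (Complex.conj_ofReal _))

theorem trace_wernerState (α : ℝ) : (wernerState α).trace = 1 := by
  have : (outer psiMinus).trace = 1 := sum_mul_conj_psiMinus
  simp [wernerState, this]

theorem wernerState_sub_mul_sub (α : ℝ) :
    (wernerState α - (((1 + 3 * α) / 4 : ℝ) : ℂ) • 1) *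
      (wernerState α - (((1 - α) / 4 : ℝ) : ℂ) • 1) = 0 := by
  have hP : outer psiMinus * outer psiMinus = outer psiMinus := by
    rw [outer_mul_outer_self, sum_mul_conj_psiMinus, one_smul]
  have h₁ : wernerState α - (((1 + 3 * α) / 4 : ℝ) : ℂ) • 1 = (α : ℂ) • (outer psiMinus - 1) := by
    rw [wernerState, smul_sub]; push_cast; module
  have h₂ : wernerState α - (((1 - α) / 4 : ℝ) : ℂ) • 1 = (α : ℂ) • outer psiMinus := by
    rw [wernerState, add_sub_cancel_right]
  rw [h₁, h₂, smul_mul_smul_comm, sub_mul, hP, one_mul, sub_self, smul_zero]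

theorem ptrA_wernerState (α : ℝ) : ptrA (wernerState α) = ((1 / 2 : ℝ) : ℂ) • 1 := by
  ext i j
  fin_cases i <;> fin_cases j <;>
    simp [ptrA, wernerState, outer, psiMinus, Fin.sum_univ_two, ofReal_sqrt_two_inv_mul_self]
  all_goals ring

theorem vNEntropy_wernerState (α : ℝ) :
    vNEntropy (wernerState α) =
      (Real.negMulLog ((1 + 3 * α) / 4) + 3 * Real.negMulLog ((1 - α) / 4)) / Real.log 2 := by
  have hH := wernerState_isHermitian α
  obtain ⟨k, hk, hsum⟩ := Fintype.exists_sum_comp_eq_of_forall_eq_or_eq (M := ℝ)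
    (hH.eigenvalues_eq_or_eq (wernerState_sub_mul_sub α))
  have hcard : Fintype.card (Fin 2 × Fin 2) = 4 := rfl
  simp only [hcard, nsmul_eq_mul, Nat.cast_sub (hcard ▸ hk)] at hsum
  have htrace : (k : ℝ) * ((1 + 3 * α) / 4) + (4 - k) * ((1 - α) / 4) = 1 := by
    have h : ((∑ i, hH.eigenvalues i : ℝ) : ℂ) = 1 := by
      rw [Complex.ofReal_sum]
      exact hH.trace_eq_sum_eigenvalues.symm.trans (trace_wernerState α)
    simpa using (hsum id).symm.trans (by exact_mod_cast h)
  -- `k` is the multiplicity of `(1 + 3α)/4`; the trace pins it to `1` unless the values coincide.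
  have hk : k = 1 ∨ (1 + 3 * α) / 4 = (1 - α) / 4 := by
    have : ((k : ℝ) - 1) * α = 0 := by linear_combination htrace
    rcases mul_eq_zero.1 this with h | h
    · exact Or.inl (by exact_mod_cast sub_eq_zero.1 h)
    · exact Or.inr (by rw [h]; norm_num)
  rw [vNEntropy, dif_pos hH, hsum fun x => -x * Real.logb 2 x]
  simp only [neg_mul_logb_two]
  rcases hk with rfl | hab
  · push_cast; ring
  · rw [hab]; push_cast; ring

theorem vNEntropy_ptrA_wernerState (α : ℝ) : vNEntropy (ptrA (wernerState α)) = 1 := by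
  rw [ptrA_wernerState, vNEntropy_smul_one, one_div, Real.logb_inv,
    Real.logb_self_eq_one one_lt_two]
  norm_num

theorem wernerCondEntropy_eq_qaryEntropy (α : ℝ) :
    wernerCondEntropy α = Real.qaryEntropy 4 (3 * (1 - α) / 4) / Real.log 2 - 1 := by
  have h₁ : 1 - 3 * (1 - α) / 4 = (1 + 3 * α) / 4 := by ring
  have h₂ : 3 * (1 - α) / 4 = 3 * ((1 - α) / 4) := by ring
  rw [wernerCondEntropy, vNEntropy_wernerState, vNEntropy_ptrA_wernerState, Real.qaryEntropy,
    Real.binEntropy_eq_negMulLog_add_negMulLog_one_sub, h₁, h₂, Real.negMulLog_mul,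
    show Real.negMulLog 3 = -3 * Real.log 3 from rfl]
  push_cast
  ring

theorem wernerCondEntropy_eq_one_sub (α : ℝ) :
    wernerCondEntropy α = 1 - (3 * (1 - α) * Real.logb 2 (1 - α) +
      (1 + 3 * α) * Real.logb 2 (1 + 3 * α)) / 4 := by
  have h4 : Real.log 4 = 2 * Real.log 2 := by
    rw [show (4 : ℝ) = 2 ^ 2 by norm_num, Real.log_pow]; push_cast; ring
  rw [wernerCondEntropy, vNEntropy_wernerState, vNEntropy_ptrA_wernerState]
  rw [div_eq_mul_inv (1 + 3 * α), div_eq_mul_inv (1 - α), Real.negMulLog_mul,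
    Real.negMulLog_mul]
  simp only [Real.negMulLog, Real.logb, Real.log_inv, h4]
  field_simp
  ring

theorem wernerCondEntropy_strictAntiOn : StrictAntiOn wernerCondEntropy (Set.Icc 0 1) := by
  intro x hx y hy hxy
  have hmem {t : ℝ} (ht : t ∈ Set.Icc (0 : ℝ) 1) :
      3 * (1 - t) / 4 ∈ Set.Icc 0 (1 - 1 / ((4 : ℕ) : ℝ)) := by
    constructor <;> push_cast <;> linarith [ht.1, ht.2]
  have := Real.qaryEntropy_strictMonoOn (by norm_num) (hmem hy) (hmem hx) (by linarith)
  rw [wernerCondEntropy_eq_qaryEntropy, wernerCondEntropy_eq_qaryEntropy]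
  gcongr

theorem continuous_wernerCondEntropy : Continuous wernerCondEntropy := by
  rw [funext wernerCondEntropy_eq_qaryEntropy]
  fun_prop

theorem wernerCondEntropy_one : wernerCondEntropy 1 = -1 := by
  simp [wernerCondEntropy_eq_qaryEntropy]

theorem wernerCondEntropy_18_div_25_pos : 0 < wernerCondEntropy (18 / 25) := by
  have key : Real.logb 2 ((7 / 25) ^ 21 * (79 / 25) ^ 79) < 100 := by
    rw [Real.logb_lt_iff_lt_rpow one_lt_two (by positivity)]
    norm_num
  rw [Real.logb_mul (by positivity) (by positivity), Real.logb_pow, Real.logb_pow] at key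
  rw [wernerCondEntropy_eq_one_sub]
  norm_num
  linarith

theorem one_div_sqrt_two_lt : 1 / Real.sqrt 2 < 18 / 25 := by
  have h : 25 / 18 < Real.sqrt 2 := (Real.lt_sqrt (by norm_num)).2 (by norm_num)
  rw [div_lt_iff₀ (by positivity)]
  linarith

/-- S(A|B) of the Werner state is strictly decreasing on [0,1], positive at 1/√2 and
negative at 1; hence it has a unique zero α₀ ∈ (1/√2, 1), satisfying the given
transcendental equation. -/
theorem werner_cond_entropy_zero :
    StrictAntiOn wernerCondEntropy (Set.Icc 0 1) ∧
    0 < wernerCondEntropy (1 / Real.sqrt 2) ∧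
    wernerCondEntropy 1 < 0 ∧
    ∃! α₀ : ℝ, α₀ ∈ Set.Ioo (1 / Real.sqrt 2) 1 ∧ wernerCondEntropy α₀ = 0 ∧
      3*(1 - α₀) * Real.logb 2 (1 - α₀) + (1 + 3*α₀) * Real.logb 2 (1 + 3*α₀) = 4 := by
  have hanti := wernerCondEntropy_strictAntiOn
  have hlt : 1 / Real.sqrt 2 < 1 := one_div_sqrt_two_lt.trans (by norm_num)
  have hIcc : Set.Icc (1 / Real.sqrt 2) 1 ⊆ Set.Icc 0 1 :=
    Set.Icc_subset_Icc_left (by positivity)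
  have hpos : 0 < wernerCondEntropy (1 / Real.sqrt 2) :=
    wernerCondEntropy_18_div_25_pos.trans
      (hanti (hIcc ⟨le_rfl, hlt.le⟩) (by norm_num) one_div_sqrt_two_lt)
  have hneg : wernerCondEntropy 1 < 0 := by rw [wernerCondEntropy_one]; norm_num
  obtain ⟨α₀, hα₀, hzero⟩ := intermediate_value_Ioo' hlt.le
    continuous_wernerCondEntropy.continuousOn ⟨hneg, hpos⟩
  refine ⟨hanti, hpos, hneg, α₀, ⟨hα₀, hzero, ?_⟩, ?_⟩
  · rw [wernerCondEntropy_eq_one_sub] at hzero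
    linarith
  · rintro β ⟨hβ, hβzero, -⟩
    exact hanti.injOn (hIcc (Set.Ioo_subset_Icc_self hβ)) (hIcc (Set.Ioo_subset_Icc_self hα₀))
      (hβzero.trans hzero.symm)

end
end

section
/- For Weyl states, the Cerf–Adami criterion is equivalent to the PPT criterion: a two-qubit Weyl state ρ satisfies 2ρ ≤ I₄ (all eigenvalues ≤ 1/2) if and only if ρ is separable. -/
open Matrix Kronecker Complex
open scoped ComplexOrder

noncomputable section

/-!
Separability gives the Cerf–Adami bound through the reduction criterion: for `ρ = ∑ pᵢ Aᵢ ⊗ Bᵢ`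
one has `ρ_A ⊗ 1 - ρ = ∑ pᵢ Aᵢ ⊗ (1 - Bᵢ) ≥ 0`, and `ρ_A = 1/2`.

Conversely, a Hermitian two-qubit matrix with maximally mixed marginals is invariant under the
spin flip, so in the magic basis `M` it becomes a real symmetric matrix `R = M† ρ M`. Diagonalise
`R` by real orthonormal vectors `u_k` with eigenvalues `d_k`; positivity and the Cerf–Adami bound
give `0 ≤ d_k ≤ 1`, and the trace gives `∑ d_k = 2`. For `k ≠ l` the vector `M (u_k + i u_l) / 2` is a
unit vector whose concurrence `∑ (u_k + i u_l)²` vanishes, so it is a product vector, and the two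
such vectors for `{k, l}` average to half the sum of the `k`-th and `l`-th eigenprojections.
Writing `d` as a point of the octahedron `{0 ≤ d ≤ 1, ∑ d = 2}`, i.e. as a nonnegative combination
of the vertices `e_k + e_l`, exhibits `ρ` as a convex combination of product states.
-/

open scoped MatrixOrder in
lemma Matrix.IsHermitian.posSemidef_one_sub_iff {𝕜 n : Type*} [RCLike 𝕜] [Fintype n]
    [DecidableEq n] {A : Matrix n n 𝕜} (hA : A.IsHermitian) :
    (1 - A).PosSemidef ↔ ∀ i, hA.eigenvalues i ≤ 1 := by
  rw [← Matrix.le_iff, CFC.le_one_iff (R := ℝ) A hA, hA.spectrum_real_eq_range_eigenvalues]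
  simp

lemma Matrix.map_ofReal_map_re_of_map_conj_eq {m n : Type*} {C : Matrix m n ℂ}
    (h : C.map (starRingEnd ℂ) = C) : (C.map re).map ((↑) : ℝ → ℂ) = C := by
  ext i j
  exact conj_eq_iff_re.mp (congrFun₂ h i j)

section RealSymmetric

variable {n : Type*} [Fintype n]

lemma Matrix.PosSemidef.of_map_ofReal {A : Matrix n n ℝ}
    (h : (A.map ((↑) : ℝ → ℂ)).PosSemidef) : A.PosSemidef := by
  refine .of_dotProduct_mulVec_nonneg ?_ fun x => ?_
  · ext i j
    simpa using congrFun₂ h.1 i j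
  · have hx : star (fun i => (x i : ℂ)) ⬝ᵥ (A.map ((↑) : ℝ → ℂ) *ᵥ fun i => (x i : ℂ)) =
        ((star x ⬝ᵥ (A *ᵥ x) : ℝ) : ℂ) := by
      simp [dotProduct, mulVec]
    have := h.dotProduct_mulVec_nonneg fun i => (x i : ℂ)
    rw [hx] at this
    exact_mod_cast this

variable [DecidableEq n]

lemma Matrix.IsHermitian.map_ofReal_eq_sum_smul_outer {A : Matrix n n ℝ} (hA : A.IsHermitian) :
    A.map ((↑) : ℝ → ℂ) =
      ∑ k, (hA.eigenvalues k : ℂ) • outer fun i => (hA.eigenvectorBasis k i : ℂ) := by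
  conv_lhs => rw [hA.spectral_theorem, Unitary.conjStarAlgAut_apply]
  ext i j
  simp [mul_apply, diagonal_apply, outer, Matrix.sum_apply]
  exact Finset.sum_congr rfl fun k _ => by ring

lemma Matrix.IsHermitian.dotProduct_eigenvectorBasis {A : Matrix n n ℝ} (hA : A.IsHermitian)
    (k l : n) :
    ⇑(hA.eigenvectorBasis k) ⬝ᵥ ⇑(hA.eigenvectorBasis l) = if k = l then 1 else 0 := by
  rw [← orthonormal_iff_ite.mp hA.eigenvectorBasis.orthonormal k l,
    EuclideanSpace.inner_eq_star_dotProduct, dotProduct_comm]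
  rfl

end RealSymmetric

section Outer

variable {m n : Type*}

lemma outer_eq_vecMulVec (v : n → ℂ) : outer v = vecMulVec v (star v) := rfl

lemma outer_posSemidef [Fintype n] (v : n → ℂ) : (outer v).PosSemidef :=
  posSemidef_vecMulVec_self_star v

lemma outer_mulVec [Fintype n] (A : Matrix m n ℂ) (v : n → ℂ) :
    outer (A *ᵥ v) = A * outer v * Aᴴ := by
  rw [outer_eq_vecMulVec, outer_eq_vecMulVec, mul_vecMulVec, vecMulVec_mul, star_mulVec]

lemma outer_kronecker (a : m → ℂ) (b : n → ℂ) :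
    outer (fun x : m × n => a x.1 * b x.2) = outer a ⊗ₖ outer b := by
  ext x y
  simp only [outer, kroneckerMap_apply, map_mul]
  ring

lemma outer_half_add_I_mul_add (a b : n → ℂ) :
    outer (fun i => (a i + I * b i) / 2) + outer (fun i => (b i + I * a i) / 2) =
      (1 / 2 : ℂ) • (outer a + outer b) := by
  ext x y
  simp only [outer, Matrix.add_apply, Matrix.smul_apply, smul_eq_mul, map_div₀, map_add, map_mul,
    conj_I, map_ofNat]
  linear_combination (-(a x * (starRingEnd ℂ) (a y) + b x * (starRingEnd ℂ) (b y)) / 4) * I_mul_I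

lemma sum_sum_smul_outer_half_add_I_mul {ι : Type*} [Fintype ι] (c : ι → ι → ℂ) (d : ι → ℂ)
    (u : ι → n → ℂ) (hc : ∀ k l, c k l = c l k) (hd : ∀ k, ∑ l, c k l = d k) :
    ∑ k, ∑ l, c k l • outer (fun i => (u k i + I * u l i) / 2) =
      (1 / 2 : ℂ) • ∑ k, d k • outer (u k) := by
  have hswap : ∑ k, ∑ l, c k l • outer (fun i => (u k i + I * u l i) / 2) =
      ∑ k, ∑ l, c k l • outer (fun i => (u l i + I * u k i) / 2) := by
    rw [Finset.sum_comm]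
    simp_rw [hc]
  have hrow : ∑ k, ∑ l, c k l • outer (u k) = ∑ k, d k • outer (u k) := by
    simp_rw [← Finset.sum_smul, hd]
  have hcol : ∑ k, ∑ l, c k l • outer (u l) = ∑ k, d k • outer (u k) := by
    rw [Finset.sum_comm, ← hrow]
    simp_rw [hc]
  rw [← smul_right_inj (two_ne_zero : (2 : ℂ) ≠ 0)]
  calc (2 : ℂ) • ∑ k, ∑ l, c k l • outer (fun i => (u k i + I * u l i) / 2)
      = ∑ k, ∑ l, c k l • (outer (fun i => (u k i + I * u l i) / 2) +
          outer (fun i => (u l i + I * u k i) / 2)) := by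
        rw [two_smul]
        nth_rewrite 2 [hswap]
        simp only [smul_add, Finset.sum_add_distrib]
    _ = (1 / 2 : ℂ) • ((∑ k, ∑ l, c k l • outer (u k)) + ∑ k, ∑ l, c k l • outer (u l)) := by
        simp only [outer_half_add_I_mul_add, smul_comm (c _ _), smul_add, Finset.smul_sum,
          Finset.sum_add_distrib]
    _ = (2 : ℂ) • (1 / 2 : ℂ) • ∑ k, d k • outer (u k) := by
        rw [hrow, hcol, ← two_smul ℂ, smul_comm]

end Outer

section PartialTrace

variable {m n : Type*} [Fintype n]

lemma ptrB_sum {ι : Type*} (s : Finset ι) (ρ : ι → Matrix (m × n) (m × n) ℂ) :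
    ptrB (∑ i ∈ s, ρ i) = ∑ i ∈ s, ptrB (ρ i) := by
  ext a b
  simp only [ptrB, Matrix.sum_apply]
  exact Finset.sum_comm

lemma ptrB_smul (c : ℂ) (ρ : Matrix (m × n) (m × n) ℂ) : ptrB (c • ρ) = c • ptrB ρ := by
  ext a b
  simp [ptrB, Finset.mul_sum]

lemma ptrB_kronecker (A : Matrix m m ℂ) (B : Matrix n n ℂ) : ptrB (A ⊗ₖ B) = B.trace • A := by
  ext a b
  simp [ptrB, trace, Finset.mul_sum, mul_comm]

end PartialTrace

section Separable

variable {m n : Type*} [Fintype m] [Fintype n] [DecidableEq m] [DecidableEq n]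

lemma IsDensityOp.posSemidef_one_sub {B : Matrix n n ℂ} (hB : IsDensityOp B) :
    (1 - B).PosSemidef := by
  obtain ⟨hpsd, htr⟩ := hB
  refine hpsd.1.posSemidef_one_sub_iff.2 fun i => ?_
  have hsum : ∑ j, hpsd.1.eigenvalues j = 1 := by
    simpa using congrArg RCLike.re (hpsd.1.trace_eq_sum_eigenvalues.symm.trans htr)
  exact hsum ▸ Finset.single_le_sum (fun j _ => hpsd.eigenvalues_nonneg j) (Finset.mem_univ i)

lemma IsSepState.posSemidef_ptrB_kronecker_one_sub {ρ : Matrix (m × n) (m × n) ℂ}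
    (hρ : IsSepState ρ) : (ptrB ρ ⊗ₖ (1 : Matrix n n ℂ) - ρ).PosSemidef := by
  obtain ⟨k, p, A, B, hp, -, hA, hB, rfl⟩ := hρ
  have hdecomp : ptrB (∑ i, (p i : ℂ) • (A i ⊗ₖ B i)) ⊗ₖ (1 : Matrix n n ℂ) -
      ∑ i, (p i : ℂ) • (A i ⊗ₖ B i) = ∑ i, (p i : ℂ) • (A i ⊗ₖ (1 - B i)) := by
    simp only [ptrB_sum, ptrB_smul, ptrB_kronecker, (hB _).2, one_smul]
    ext x y
    simp only [Matrix.sub_apply, Matrix.sum_apply, Matrix.smul_apply, kroneckerMap_apply,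
      smul_eq_mul, Finset.sum_mul, ← Finset.sum_sub_distrib]
    exact Finset.sum_congr rfl fun i _ => by ring
  rw [hdecomp]
  refine posSemidef_sum _ fun i _ => ((hA i).1.kronecker (hB i).posSemidef_one_sub).smul ?_
  exact_mod_cast hp i

lemma exists_isDensityOp_kronecker_eq {X : Matrix m m ℂ} {Y : Matrix n n ℂ}
    (hX : X.PosSemidef) (hY : Y.PosSemidef) (h : (X ⊗ₖ Y).trace = 1) :
    ∃ A B, IsDensityOp A ∧ IsDensityOp B ∧ X ⊗ₖ Y = A ⊗ₖ B := by
  rw [trace_kronecker] at h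
  refine ⟨Y.trace • X, X.trace • Y, ⟨hX.smul hY.trace_nonneg, ?_⟩,
    ⟨hY.smul hX.trace_nonneg, ?_⟩, ?_⟩
  · rw [trace_smul, smul_eq_mul, mul_comm, h]
  · rw [trace_smul, smul_eq_mul, h]
  · rw [smul_kronecker, kronecker_smul, smul_smul, mul_comm, h, one_smul]

lemma exists_isDensityOp_outer_eq_kronecker (a : m → ℂ) (b : n → ℂ)
    (h : (outer fun x : m × n => a x.1 * b x.2).trace = 1) :
    ∃ A B, IsDensityOp A ∧ IsDensityOp B ∧ outer (fun x : m × n => a x.1 * b x.2) = A ⊗ₖ B := by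
  rw [outer_kronecker] at h ⊢
  exact exists_isDensityOp_kronecker_eq (outer_posSemidef a) (outer_posSemidef b) h

lemma IsSepState.of_sum {ι : Type*} [Fintype ι] (w : ι → ℝ) (A : ι → Matrix m m ℂ)
    (B : ι → Matrix n n ℂ) (hw : ∀ i, 0 ≤ w i) (hw1 : ∑ i, w i = 1)
    (hA : ∀ i, IsDensityOp (A i)) (hB : ∀ i, IsDensityOp (B i)) :
    IsSepState (∑ i, (w i : ℂ) • (A i ⊗ₖ B i)) := by
  let e := (Fintype.equivFin ι).symm
  refine ⟨Fintype.card ι, w ∘ e, A ∘ e, B ∘ e, fun i => hw _, ?_, fun i => hA _, fun i => hB _, ?_⟩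
  · rw [← hw1, ← e.sum_comp]
    rfl
  · rw [← e.sum_comp]
    rfl

lemma IsSepState.of_sum_smul_outer {ι : Type*} [Fintype ι] (w : ι → ℝ) (ψ : ι → m × n → ℂ)
    (hw : ∀ i, 0 ≤ w i) (hw1 : ∑ i, w i = 1)
    (hψ : ∀ i, w i ≠ 0 → ∃ A B, IsDensityOp A ∧ IsDensityOp B ∧ outer (ψ i) = A ⊗ₖ B) :
    IsSepState (∑ i, (w i : ℂ) • outer (ψ i)) := by
  obtain ⟨i₀, hi₀⟩ : ∃ i, w i ≠ 0 := by
    by_contra! h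
    simp [h] at hw1
  obtain ⟨A₀, B₀, hA₀, hB₀, -⟩ := hψ i₀ hi₀
  have hterm : ∀ i, ∃ A B, IsDensityOp A ∧ IsDensityOp B ∧
      (w i : ℂ) • outer (ψ i) = (w i : ℂ) • (A ⊗ₖ B) := by
    intro i
    by_cases hi : w i = 0
    · exact ⟨A₀, B₀, hA₀, hB₀, by simp [hi]⟩
    · obtain ⟨A, B, hA, hB, hAB⟩ := hψ i hi
      exact ⟨A, B, hA, hB, by rw [hAB]⟩
  choose A B hA hB hAB using hterm
  simp_rw [hAB]
  exact IsSepState.of_sum w A B hw hw1 hA hB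

end Separable

lemma exists_eq_mul_of_mul_eq_mul (v : Fin 2 × Fin 2 → ℂ)
    (h : v (0, 0) * v (1, 1) = v (0, 1) * v (1, 0)) :
    ∃ a b : Fin 2 → ℂ, v = fun x => a x.1 * b x.2 := by
  by_cases h00 : v (0, 0) = 0
  · rw [h00, zero_mul, eq_comm, mul_eq_zero] at h
    rcases h with h01 | h10
    · refine ⟨![0, 1], ![v (1, 0), v (1, 1)], funext fun ⟨i, j⟩ => ?_⟩
      fin_cases i <;> fin_cases j <;> simp [h00, h01]
    · refine ⟨![v (0, 1), v (1, 1)], ![0, 1], funext fun ⟨i, j⟩ => ?_⟩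
      fin_cases i <;> fin_cases j <;> simp [h00, h10]
  · refine ⟨![v (0, 0), v (1, 0)], ![1, v (0, 1) / v (0, 0)], funext fun ⟨i, j⟩ => ?_⟩
    fin_cases i <;> fin_cases j <;> simp <;> field_simp
    linear_combination h

lemma spinFlip_apply (ρ : Matrix (Fin 2 × Fin 2) (Fin 2 × Fin 2) ℂ) (i j k l : Fin 2) :
    spinFlip ρ (i, j) (k, l) = (if i = k then 1 else -1) * (if j = l then 1 else -1) *
      starRingEnd ℂ (ρ (1 - i, 1 - j) (1 - k, 1 - l)) := by
  fin_cases i <;> fin_cases j <;> fin_cases k <;> fin_cases l <;>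
    simp [spinFlip, pauli, mul_apply, Fintype.sum_prod_type]

lemma spinFlip_eq_self {ρ : Matrix (Fin 2 × Fin 2) (Fin 2 × Fin 2) ℂ} (hρ : ρ.IsHermitian)
    (hA : ptrB ρ = (1/2 : ℂ) • (1 : Matrix (Fin 2) (Fin 2) ℂ))
    (hB : ptrA ρ = (1/2 : ℂ) • (1 : Matrix (Fin 2) (Fin 2) ℂ)) : spinFlip ρ = ρ := by
  have hA' : ∀ a b, ρ (a, 0) (b, 0) + ρ (a, 1) (b, 1) = if a = b then 1 / 2 else 0 :=
    fun a b => by simpa [ptrB, one_apply] using congrFun₂ hA a b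
  have hB' : ∀ a b, ρ (0, a) (0, b) + ρ (1, a) (1, b) = if a = b then 1 / 2 else 0 :=
    fun a b => by simpa [ptrA, one_apply] using congrFun₂ hB a b
  have hH : ∀ x y, starRingEnd ℂ (ρ x y) = ρ y x := fun x y => by
    simpa using congrFun₂ hρ y x
  ext ⟨i, j⟩ ⟨k, l⟩
  rw [spinFlip_apply, hH]
  have := hA' 0 0; have := hA' 0 1; have := hA' 1 0; have := hA' 1 1
  have := hB' 0 0; have := hB' 0 1; have := hB' 1 0; have := hB' 1 1
  fin_cases i <;> fin_cases j <;> fin_cases k <;> fin_cases l <;> simp_all <;> grind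

/-- Columns: `√2` times the magic basis `|Φ⁺⟩, i|Φ⁻⟩, i|Ψ⁺⟩, |Ψ⁻⟩`. -/
def magicBasis : Matrix (Fin 2 × Fin 2) (Fin 2 × Fin 2) ℂ := Matrix.of fun x k =>
  match x, k with
  | (0, 0), (0, 0) => 1
  | (1, 1), (0, 0) => 1
  | (0, 0), (0, 1) => I
  | (1, 1), (0, 1) => -I
  | (0, 1), (1, 0) => I
  | (1, 0), (1, 0) => I
  | (0, 1), (1, 1) => 1
  | (1, 0), (1, 1) => -1
  | _, _ => 0

lemma magicBasis_conjTranspose_mul_self : magicBasisᴴ * magicBasis = (2 : ℂ) • 1 := by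
  ext ⟨i, j⟩ ⟨k, l⟩
  fin_cases i <;> fin_cases j <;> fin_cases k <;> fin_cases l <;>
    simp [magicBasis, mul_apply, Fintype.sum_prod_type, one_apply] <;> ring_nf

lemma magicBasis_mul_conjTranspose_self : magicBasis * magicBasisᴴ = (2 : ℂ) • 1 := by
  ext ⟨i, j⟩ ⟨k, l⟩
  fin_cases i <;> fin_cases j <;> fin_cases k <;> fin_cases l <;>
    simp [magicBasis, mul_apply, Fintype.sum_prod_type, one_apply] <;> ring_nf

lemma magicBasis_map_conj :
    magicBasis.map (starRingEnd ℂ) = -((pauli 1 ⊗ₖ pauli 1) * magicBasis) := by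
  ext ⟨i, j⟩ ⟨k, l⟩
  fin_cases i <;> fin_cases j <;> fin_cases k <;> fin_cases l <;>
    simp [magicBasis, pauli, mul_apply, Fintype.sum_prod_type]

lemma conjTranspose_magicBasis_map_conj :
    magicBasisᴴ.map (starRingEnd ℂ) = -(magicBasisᴴ * (pauli 1 ⊗ₖ pauli 1)) := by
  ext ⟨i, j⟩ ⟨k, l⟩
  fin_cases i <;> fin_cases j <;> fin_cases k <;> fin_cases l <;>
    simp [magicBasis, pauli, mul_apply, Fintype.sum_prod_type]

lemma map_conj_conjTranspose_magicBasis_mul_mul (ρ : Matrix (Fin 2 × Fin 2) (Fin 2 × Fin 2) ℂ) :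
    (magicBasisᴴ * ρ * magicBasis).map (starRingEnd ℂ) =
      magicBasisᴴ * spinFlip ρ * magicBasis := by
  simp only [Matrix.map_mul, magicBasis_map_conj, conjTranspose_magicBasis_map_conj, spinFlip,
    neg_mul, mul_neg, neg_neg, Matrix.mul_assoc]

lemma magicBasis_mulVec_det (μ : Fin 2 × Fin 2 → ℂ) :
    (magicBasis *ᵥ μ) (0, 0) * (magicBasis *ᵥ μ) (1, 1) -
      (magicBasis *ᵥ μ) (0, 1) * (magicBasis *ᵥ μ) (1, 0) = ∑ k, μ k ^ 2 := by
  simp [magicBasis, mulVec, dotProduct, Fintype.sum_prod_type]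
  ring_nf
  simp [I_sq]

lemma trace_outer_magicBasis_mulVec (μ : Fin 2 × Fin 2 → ℂ) :
    (outer (magicBasis *ᵥ μ)).trace = 2 * (outer μ).trace := by
  rw [outer_mulVec, trace_mul_cycle, magicBasis_conjTranspose_mul_self, Matrix.smul_mul,
    Matrix.one_mul, trace_smul, smul_eq_mul]

lemma smul_magicBasis_mul_conjTranspose_magicBasis_mul_mul
    (ρ : Matrix (Fin 2 × Fin 2) (Fin 2 × Fin 2) ℂ) :
    (1 / 4 : ℂ) • (magicBasis * (magicBasisᴴ * ρ * magicBasis) * magicBasisᴴ) = ρ := by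
  rw [← Matrix.mul_assoc, ← Matrix.mul_assoc, magicBasis_mul_conjTranspose_self, Matrix.mul_assoc,
    magicBasis_mul_conjTranspose_self]
  simp only [Matrix.smul_mul, Matrix.mul_smul, Matrix.one_mul, Matrix.mul_one, smul_smul]
  norm_num

lemma conjTranspose_magicBasis_mul_one_sub_two_smul_mul
    (ρ : Matrix (Fin 2 × Fin 2) (Fin 2 × Fin 2) ℂ) :
    magicBasisᴴ * (1 - (2 : ℂ) • ρ) * magicBasis =
      (2 : ℂ) • (1 - magicBasisᴴ * ρ * magicBasis) := by
  rw [Matrix.mul_sub, Matrix.sub_mul, Matrix.mul_one, magicBasis_conjTranspose_mul_self,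
    Matrix.mul_smul, Matrix.smul_mul, smul_sub]

lemma trace_conjTranspose_magicBasis_mul_mul (ρ : Matrix (Fin 2 × Fin 2) (Fin 2 × Fin 2) ℂ) :
    (magicBasisᴴ * ρ * magicBasis).trace = 2 * ρ.trace := by
  rw [trace_mul_cycle, magicBasis_mul_conjTranspose_self, Matrix.smul_mul, Matrix.one_mul,
    trace_smul, smul_eq_mul]

lemma exists_map_ofReal_eq_conjTranspose_magicBasis_mul_mul
    {ρ : Matrix (Fin 2 × Fin 2) (Fin 2 × Fin 2) ℂ} (hρ : ρ.IsHermitian)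
    (hA : ptrB ρ = (1/2 : ℂ) • (1 : Matrix (Fin 2) (Fin 2) ℂ))
    (hB : ptrA ρ = (1/2 : ℂ) • (1 : Matrix (Fin 2) (Fin 2) ℂ)) :
    ∃ R : Matrix (Fin 2 × Fin 2) (Fin 2 × Fin 2) ℝ,
      R.map ((↑) : ℝ → ℂ) = magicBasisᴴ * ρ * magicBasis :=
  ⟨_, Matrix.map_ofReal_map_re_of_map_conj_eq <| by
    rw [map_conj_conjTranspose_magicBasis_mul_mul, spinFlip_eq_self hρ hA hB]⟩

lemma exists_isDensityOp_outer_magicBasis_mulVec_eq_kronecker (x y : Fin 2 × Fin 2 → ℝ)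
    (hx : x ⬝ᵥ x = 1) (hy : y ⬝ᵥ y = 1) (hxy : x ⬝ᵥ y = 0) :
    ∃ A B, IsDensityOp A ∧ IsDensityOp B ∧
      outer (magicBasis *ᵥ fun i => ((x i : ℂ) + I * y i) / 2) = A ⊗ₖ B := by
  have hx' : ∑ i, (x i : ℂ) * x i = 1 := by exact_mod_cast hx
  have hy' : ∑ i, (y i : ℂ) * y i = 1 := by exact_mod_cast hy
  have hxy' : ∑ i, (x i : ℂ) * y i = 0 := by exact_mod_cast hxy
  have hsq : ∑ i, (((x i : ℂ) + I * y i) / 2) ^ 2 = 0 := by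
    calc ∑ i, (((x i : ℂ) + I * y i) / 2) ^ 2
        = ((∑ i, (x i : ℂ) * x i) - ∑ i, (y i : ℂ) * y i + 2 * I * ∑ i, (x i : ℂ) * y i) / 4 := by
          simp only [Finset.mul_sum, ← Finset.sum_sub_distrib, ← Finset.sum_add_distrib,
            Finset.sum_div]
          refine Finset.sum_congr rfl fun i _ => ?_
          linear_combination (y i : ℂ) ^ 2 / 4 * I_sq
      _ = 0 := by rw [hx', hy', hxy']; ring
  have htr : (outer (magicBasis *ᵥ fun i => ((x i : ℂ) + I * y i) / 2)).trace = 1 := by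
    rw [trace_outer_magicBasis_mulVec]
    simp only [outer, trace, diag, map_div₀, map_add, map_mul, conj_ofReal, conj_I, map_ofNat]
    calc 2 * ∑ i, ((x i : ℂ) + I * y i) / 2 * ((x i + -I * y i) / 2)
        = 2 * (((∑ i, (x i : ℂ) * x i) + ∑ i, (y i : ℂ) * y i) / 4) := by
          simp only [← Finset.sum_add_distrib, Finset.sum_div]
          congr 1
          refine Finset.sum_congr rfl fun i _ => ?_
          linear_combination -(y i : ℂ) ^ 2 / 4 * I_sq
      _ = 1 := by rw [hx', hy']; norm_num
  obtain ⟨a, b, hab⟩ := exists_eq_mul_of_mul_eq_mul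
    (magicBasis *ᵥ fun i => ((x i : ℂ) + I * y i) / 2)
    (by linear_combination (magicBasis_mulVec_det _).trans hsq)
  rw [hab] at htr ⊢
  exact exists_isDensityOp_outer_eq_kronecker a b htr

/-- Off the diagonal `q x y = max 0 (d x + d y - 1) + s`: on the two edges of each of the three
perfect matchings of `K₄` the quantity `d x + d y - 1` takes opposite values, and `s ≥ 0` spreads
the remaining mass evenly over the six edges. -/
lemma exists_symm_nonneg_weights_rowSum_eq (d : Fin 2 × Fin 2 → ℝ) (h0 : ∀ x, 0 ≤ d x)
    (h1 : ∀ x, d x ≤ 1) (hsum : ∑ x, d x = 2) :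
    ∃ q : Fin 2 × Fin 2 → Fin 2 × Fin 2 → ℝ, (∀ x y, q x y = q y x) ∧ (∀ x, q x x = 0) ∧
      (∀ x y, 0 ≤ q x y) ∧ ∀ x, ∑ y, q x y = d x := by
  simp only [Fintype.sum_prod_type, Fin.sum_univ_two] at hsum
  have hmax : ∀ a : ℝ, max 0 a = (a + |a|) / 2 := fun a => by
    rcases le_total 0 a with h | h
    · rw [max_eq_right h, abs_of_nonneg h]; ring
    · rw [max_eq_left h, abs_of_nonpos h]; ring
  have hc₁ : |d (1, 0) + d (1, 1) - 1| = |d (0, 0) + d (0, 1) - 1| := by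
    rw [← abs_neg]; congr 1; linarith
  have hc₂ : |d (0, 1) + d (1, 1) - 1| = |d (0, 0) + d (1, 0) - 1| := by
    rw [← abs_neg]; congr 1; linarith
  have hc₃ : |d (0, 1) + d (1, 0) - 1| = |d (0, 0) + d (1, 1) - 1| := by
    rw [← abs_neg]; congr 1; linarith
  obtain ⟨s, hs_def⟩ : ∃ s, s = (1 - |d (0, 0) + d (0, 1) - 1| - |d (0, 0) + d (1, 0) - 1| -
      |d (0, 0) + d (1, 1) - 1|) / 6 := ⟨_, rfl⟩
  have hs : 0 ≤ s := by
    have := h0 (0, 0); have := h0 (0, 1); have := h0 (1, 0); have := h0 (1, 1)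
    have := h1 (0, 0); have := h1 (0, 1); have := h1 (1, 0); have := h1 (1, 1)
    rcases abs_cases (d (0, 0) + d (0, 1) - 1) with h₁ | h₁ <;>
      rcases abs_cases (d (0, 0) + d (1, 0) - 1) with h₂ | h₂ <;>
      rcases abs_cases (d (0, 0) + d (1, 1) - 1) with h₃ | h₃ <;> linarith
  refine ⟨fun x y => if x = y then 0 else max 0 (d x + d y - 1) + s, fun x y => ?_,
    fun x => if_pos rfl, fun x y => ?_, fun x => ?_⟩
  · by_cases h : x = y
    · simp [h]
    · simp [h, Ne.symm h, add_comm (d x)]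
  · dsimp only
    split_ifs
    · exact le_rfl
    · exact add_nonneg (le_max_left _ _) hs
  · fin_cases x <;> simp only [Fintype.sum_prod_type, Fin.sum_univ_two] <;> simp [hmax] <;>
      ring_nf at hc₁ hc₂ hc₃ hsum hs_def ⊢ <;> linarith

lemma isSepState_smul_magicBasis_mul_sum_smul_outer_mul (p : Fin 2 × Fin 2 → ℝ)
    (u : Fin 2 × Fin 2 → Fin 2 × Fin 2 → ℝ) (hu : ∀ k l, u k ⬝ᵥ u l = if k = l then 1 else 0)
    (h0 : ∀ k, 0 ≤ p k) (h1 : ∀ k, p k ≤ 1) (hsum : ∑ k, p k = 2) :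
    IsSepState ((1 / 4 : ℂ) •
      (magicBasis * (∑ k, (p k : ℂ) • outer fun i => (u k i : ℂ)) * magicBasisᴴ)) := by
  obtain ⟨q, hq_symm, hq_diag, hq_nonneg, hq_row⟩ :=
    exists_symm_nonneg_weights_rowSum_eq p h0 h1 hsum
  have hpq : ∑ k, (p k : ℂ) • outer (fun i => (u k i : ℂ)) = (2 : ℂ) • ∑ k, ∑ l, (q k l : ℂ) •
      outer (fun i => ((u k i : ℂ) + I * u l i) / 2) := by
    rw [sum_sum_smul_outer_half_add_I_mul (fun k l => (q k l : ℂ)) (fun k => (p k : ℂ))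
      (fun k i => (u k i : ℂ)) (fun k l => by rw [hq_symm]) (fun k => by exact_mod_cast hq_row k),
      smul_smul]
    norm_num
  have hdecomp : (1 / 4 : ℂ) • (magicBasis * (∑ k, (p k : ℂ) • outer fun i => (u k i : ℂ)) *
      magicBasisᴴ) = ∑ s : (Fin 2 × Fin 2) × (Fin 2 × Fin 2), ((q s.1 s.2 / 2 : ℝ) : ℂ) •
        outer (magicBasis *ᵥ fun i => ((u s.1 i : ℂ) + I * u s.2 i) / 2) := by
    rw [Fintype.sum_prod_type' (f := fun k l => ((q k l / 2 : ℝ) : ℂ) •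
      outer (magicBasis *ᵥ fun i => ((u k i : ℂ) + I * u l i) / 2))]
    simp only [hpq, outer_mulVec, Matrix.mul_smul, Matrix.smul_mul, Matrix.mul_sum, Matrix.sum_mul,
      Finset.smul_sum, smul_smul]
    refine Finset.sum_congr rfl fun k _ => Finset.sum_congr rfl fun l _ => ?_
    congr 1
    push_cast
    ring
  rw [hdecomp]
  refine IsSepState.of_sum_smul_outer _ _ (fun s => div_nonneg (hq_nonneg _ _) two_pos.le) ?_
    fun s hs => ?_
  · simp only [Fintype.sum_prod_type, ← Finset.sum_div, hq_row, hsum]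
    norm_num
  · have hkl : s.1 ≠ s.2 := fun h => hs (by rw [h, hq_diag, zero_div])
    exact exists_isDensityOp_outer_magicBasis_mulVec_eq_kronecker _ _
      (by simpa using hu s.1 s.1) (by simpa using hu s.2 s.2) (by simpa [hkl] using hu s.1 s.2)

lemma IsSepState.posSemidef_one_sub_two_smul {ρ : Matrix (Fin 2 × Fin 2) (Fin 2 × Fin 2) ℂ}
    (hA : ptrB ρ = (1/2 : ℂ) • (1 : Matrix (Fin 2) (Fin 2) ℂ)) (hρ : IsSepState ρ) :
    (1 - (2 : ℂ) • ρ).PosSemidef := by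
  have h := hρ.posSemidef_ptrB_kronecker_one_sub.smul (zero_le_two : (0 : ℂ) ≤ 2)
  rwa [hA, smul_kronecker, one_kronecker_one, smul_sub, smul_smul, mul_one_div_cancel two_ne_zero,
    one_smul] at h

lemma isSepState_of_posSemidef_one_sub_two_smul {ρ : Matrix (Fin 2 × Fin 2) (Fin 2 × Fin 2) ℂ}
    (hρ : IsDensityOp ρ) (hA : ptrB ρ = (1/2 : ℂ) • (1 : Matrix (Fin 2) (Fin 2) ℂ))
    (hB : ptrA ρ = (1/2 : ℂ) • (1 : Matrix (Fin 2) (Fin 2) ℂ))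
    (h : (1 - (2 : ℂ) • ρ).PosSemidef) : IsSepState ρ := by
  obtain ⟨R, hR⟩ := exists_map_ofReal_eq_conjTranspose_magicBasis_mul_mul hρ.1.1 hA hB
  have hRpsd : R.PosSemidef := .of_map_ofReal (hR ▸ hρ.1.conjTranspose_mul_mul_same magicBasis)
  have hR1 : (1 - R).PosSemidef := by
    refine .of_map_ofReal ?_
    have h' := (h.conjTranspose_mul_mul_same magicBasis).smul (by norm_num [Complex.le_def] :
      (0 : ℂ) ≤ 1 / 2)
    rwa [conjTranspose_magicBasis_mul_one_sub_two_smul_mul, smul_smul,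
      one_div_mul_cancel two_ne_zero, one_smul, ← hR, ← Matrix.map_one _ ofReal_zero ofReal_one,
      ← Matrix.map_sub _ ofReal_sub] at h'
  have htr : ∑ k, hRpsd.1.eigenvalues k = 2 := by
    have h2 := (AddMonoidHom.map_trace ofRealHom R).trans (congrArg trace hR)
    rw [trace_conjTranspose_magicBasis_mul_mul, hρ.2, hRpsd.1.trace_eq_sum_eigenvalues] at h2
    simpa using congrArg re h2
  rw [← smul_magicBasis_mul_conjTranspose_magicBasis_mul_mul ρ, ← hR,
    hRpsd.1.map_ofReal_eq_sum_smul_outer]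
  exact isSepState_smul_magicBasis_mul_sum_smul_outer_mul _ _ hRpsd.1.dotProduct_eigenvectorBasis
    hRpsd.eigenvalues_nonneg (hRpsd.1.posSemidef_one_sub_iff.1 hR1) htr

/-- For Weyl states the Cerf–Adami criterion 2ρ ≤ I₄ is equivalent to separability. -/
theorem weyl_CAO_criterion_iff_separable
    (ρ : Matrix (Fin 2 × Fin 2) (Fin 2 × Fin 2) ℂ) (hρ : IsDensityOp ρ)
    (hA : ptrB ρ = (1/2 : ℂ) • (1 : Matrix (Fin 2) (Fin 2) ℂ))
    (hB : ptrA ρ = (1/2 : ℂ) • (1 : Matrix (Fin 2) (Fin 2) ℂ)) :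
    ((1 : Matrix (Fin 2 × Fin 2) (Fin 2 × Fin 2) ℂ) - (2 : ℂ) • ρ).PosSemidef ↔
      IsSepState ρ :=
  ⟨isSepState_of_posSemidef_one_sub_two_smul hρ hA hB, IsSepState.posSemidef_one_sub_two_smul hA⟩

end
end

section
/- The concurrence of the filtered Gisin state ρ_F(λ,θ) = (λ sin 2θ · |Ψ⁺⟩⟨Ψ⁺| + (1-λ)·ρ_top)/(1 - λ + λ sin 2θ) equals max{0, (λ sin 2θ - (1-λ))/(λ sin 2θ + 1 - λ)}, and is greater than or equal to the concurrence max{0, λ sin 2θ + λ - 1} of the unfiltered Gisin state ρ_G(λ,θ). -/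
open Matrix Kronecker Complex
open scoped ComplexOrder

noncomputable section

/-- The filtered Gisin state. -/
noncomputable def filteredGisin (lam θ : ℝ) : Matrix (Fin 2 × Fin 2) (Fin 2 × Fin 2) ℂ :=
  ((1 / (1 - lam + lam * Real.sin (2*θ)) : ℝ) : ℂ) •
    (((lam * Real.sin (2*θ) : ℝ) : ℂ) • outer psiPlus + ((1 - lam : ℝ) : ℂ) • rhoTop)


section Aux
open Polynomial

def eqvQ : Fin 2 × Fin 2 ≃ (Fin 2 ⊕ Fin 2) where
  toFun p := if p.1 = p.2 then Sum.inl p.1 else Sum.inr p.1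
  invFun := Sum.elim (fun i => (i, i)) (fun i => (i, i + 1))
  left_inv := by decide
  right_inv := by decide

def blk (A B : Matrix (Fin 2) (Fin 2) ℂ) : Matrix (Fin 2 × Fin 2) (Fin 2 × Fin 2) ℂ :=
  (Matrix.reindex eqvQ eqvQ).symm (Matrix.fromBlocks A 0 0 B)

lemma blk_mul (A B A' B' : Matrix (Fin 2) (Fin 2) ℂ) :
    blk A B * blk A' B' = blk (A * A') (B * B') := by
  simp [blk, Matrix.submatrix_mul_equiv, Matrix.fromBlocks_multiply]

lemma blk_map (A B : Matrix (Fin 2) (Fin 2) ℂ) (f : ℂ →+* ℂ) :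
    (blk A B).map f = blk (A.map f) (B.map f) := by
  simp [blk, ← Matrix.submatrix_map, Matrix.fromBlocks_map]

lemma pauli_kron : pauli 1 ⊗ₖ pauli 1 = blk !![0,-1;-1,0] !![0,1;1,0] := by
  ext ⟨i,j⟩ ⟨k,l⟩
  fin_cases i <;> fin_cases j <;> fin_cases k <;> fin_cases l <;>
    simp [pauli, blk, eqvQ, Matrix.fromBlocks, Matrix.kroneckerMap_apply]

lemma charpoly_blk (a d p q r s : ℂ) :
    (blk !![a,0;0,d] !![p,q;r,s]).charpoly =
      (X - C a) * (X - C d) * (X^2 - C (p+s)*X + C (p*s - q*r)) := by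
  have h : Matrix.reindex eqvQ eqvQ (blk !![a,0;0,d] !![p,q;r,s]) =
      Matrix.fromBlocks !![a,0;0,d] 0 0 !![p,q;r,s] := by
    simp [blk]
  rw [← Matrix.charpoly_reindex eqvQ, h, Matrix.charpoly_fromBlocks_zero₁₂]
  rw [Matrix.charpoly, Matrix.charpoly, Matrix.det_fin_two, Matrix.det_fin_two]
  simp only [charmatrix_apply, Matrix.diagonal_apply, Matrix.cons_val_zero,
    Matrix.cons_val_one, Matrix.head_cons, Matrix.head_fin_const, if_true, if_false,
    Matrix.cons_val', Matrix.empty_val', Matrix.cons_val_fin_one]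
  rw [show !![a,0;0,d] 0 0 = a from rfl, show !![a,0;0,d] 1 1 = d from rfl,
    show !![a,0;0,d] 0 1 = 0 from rfl, show !![a,0;0,d] 1 0 = 0 from rfl,
    show !![p,q;r,s] 0 0 = p from rfl, show !![p,q;r,s] 1 1 = s from rfl,
    show !![p,q;r,s] 0 1 = q from rfl, show !![p,q;r,s] 1 0 = r from rfl]
  rw [if_neg (by decide : ¬(0:Fin 2) = 1), if_neg (by decide : ¬(1:Fin 2) = 0)]
  simp only [map_zero, _root_.map_add, _root_.map_sub, _root_.map_mul, sub_zero, zero_sub]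
  ring

lemma spinFlip_blk_real (a d p q r s : ℝ) :
    spinFlip (blk !![(a:ℂ),0;0,(d:ℂ)] !![(p:ℂ),(q:ℂ);(r:ℂ),(s:ℂ)]) =
      blk !![(d:ℂ),0;0,(a:ℂ)] !![(s:ℂ),(r:ℂ);(q:ℂ),(p:ℂ)] := by
  rw [spinFlip, pauli_kron, blk_map, blk_mul, blk_mul]
  refine congrArg₂ blk ?_ ?_ <;>
    · ext i j
      fin_cases i <;> fin_cases j <;>
        simp [Matrix.mul_apply, Matrix.vecMul, dotProduct, Fin.sum_univ_two,
          Matrix.map_apply, Complex.conj_ofReal]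

set_option maxHeartbeats 2000000 in
lemma filteredGisin_eq (lam θ : ℝ) (hN : (1 - lam + lam * Real.sin (2*θ)) ≠ 0) :
    filteredGisin lam θ =
      blk !![(((1-lam)/(2*(1 - lam + lam * Real.sin (2*θ))) : ℝ) : ℂ), 0;
             0, (((1-lam)/(2*(1 - lam + lam * Real.sin (2*θ))) : ℝ) : ℂ)]
          !![((lam * Real.sin (2*θ)/(2*(1 - lam + lam * Real.sin (2*θ))) : ℝ) : ℂ),
             ((lam * Real.sin (2*θ)/(2*(1 - lam + lam * Real.sin (2*θ))) : ℝ) : ℂ);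
             ((lam * Real.sin (2*θ)/(2*(1 - lam + lam * Real.sin (2*θ))) : ℝ) : ℂ),
             ((lam * Real.sin (2*θ)/(2*(1 - lam + lam * Real.sin (2*θ))) : ℝ) : ℂ)] := by
  have h2 : Real.sqrt 2 * Real.sqrt 2 = 2 := Real.mul_self_sqrt (by norm_num)
  have h2c : ((Real.sqrt 2 : ℝ) : ℂ)⁻¹ * ((Real.sqrt 2 : ℝ) : ℂ)⁻¹ = (2 : ℂ)⁻¹ := by
    rw [← mul_inv, ← Complex.ofReal_mul, h2]; norm_num
  have hNc : ((1 - lam + lam * Real.sin (2*θ) : ℝ) : ℂ) ≠ 0 := by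
    exact_mod_cast Complex.ofReal_ne_zero.mpr hN
  push_cast at hNc
  ext ⟨i,j⟩ ⟨k,l⟩
  fin_cases i <;> fin_cases j <;> fin_cases k <;> fin_cases l <;>
    · simp [filteredGisin, outer, psiPlus, rhoTop, blk, eqvQ, Matrix.fromBlocks,
        Matrix.diagonal, Prod.ext_iff, mul_assoc, h2c]
      try push_cast
      try field_simp
      try ring
      try tauto

set_option maxHeartbeats 2000000 in
lemma gisinState_eq (lam θ : ℝ) :
    gisinState lam θ =
      blk !![(((1-lam)/2 : ℝ) : ℂ), 0; 0, (((1-lam)/2 : ℝ) : ℂ)]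
          !![((lam * (Real.sin θ * Real.sin θ) : ℝ) : ℂ),
             ((lam * (Real.sin θ * Real.cos θ) : ℝ) : ℂ);
             ((lam * (Real.sin θ * Real.cos θ) : ℝ) : ℂ),
             ((lam * (Real.cos θ * Real.cos θ) : ℝ) : ℂ)] := by
  ext ⟨i,j⟩ ⟨k,l⟩
  fin_cases i <;> fin_cases j <;> fin_cases k <;> fin_cases l <;>
    · simp [gisinState, outer, psiTheta, rhoTop, blk, eqvQ, Matrix.fromBlocks,
        Matrix.diagonal, Prod.ext_iff, ← Complex.sin_conj, ← Complex.cos_conj,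
        Complex.conj_ofReal]
      try push_cast
      try ring
      try tauto

lemma anti4 {x y z w : ℝ} (h1 : y ≤ x) (h2 : z ≤ y) (h3 : w ≤ z) :
    Antitone ![x, y, z, w] := by
  intro i j hij
  fin_cases i <;> fin_cases j <;> simp_all [Fin.le_def] <;> first | omega | linarith

lemma concEq_of (ρ : Matrix (Fin 2 × Fin 2) (Fin 2 × Fin 2) ℂ) (β γ : ℝ)
    (hβ : 0 ≤ β) (hγ : 0 ≤ γ)
    (h : (ρ * spinFlip ρ).charpoly
      = (X - C ((β : ℝ) : ℂ)) * (X - C ((β : ℝ) : ℂ)) * (X^2 - C ((γ : ℝ) : ℂ) * X)) :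
    ConcurrenceEq ρ (max 0 (Real.sqrt γ - 2 * Real.sqrt β)) := by
  rcases le_total β γ with hbg | hgb
  · refine ⟨![γ, β, β, 0], anti4 hbg le_rfl hβ, ?_, ?_, ?_⟩
    · intro i; fin_cases i <;> simp [hβ, hγ]
    · rw [h, Fin.prod_univ_four]
      simp only [Matrix.cons_val_zero, Matrix.cons_val_one, Matrix.head_cons,
        Matrix.cons_val_two, Matrix.tail_cons, Matrix.cons_val_three, Complex.ofReal_zero,
        map_zero, sub_zero]
      ring
    · simp only [Matrix.cons_val_zero, Matrix.cons_val_one, Matrix.head_cons,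
        Matrix.cons_val_two, Matrix.tail_cons, Matrix.cons_val_three, Real.sqrt_zero]
      ring_nf
  · refine ⟨![β, β, γ, 0], anti4 le_rfl hgb hγ, ?_, ?_, ?_⟩
    · intro i; fin_cases i <;> simp [hβ, hγ]
    · rw [h, Fin.prod_univ_four]
      simp only [Matrix.cons_val_zero, Matrix.cons_val_one, Matrix.head_cons,
        Matrix.cons_val_two, Matrix.tail_cons, Matrix.cons_val_three, Complex.ofReal_zero,
        map_zero, sub_zero]
      ring
    · simp only [Matrix.cons_val_zero, Matrix.cons_val_one, Matrix.head_cons,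
        Matrix.cons_val_two, Matrix.tail_cons, Matrix.cons_val_three, Real.sqrt_zero]
      have h1 : Real.sqrt γ ≤ 2 * Real.sqrt β := by
        have := Real.sqrt_le_sqrt hgb
        nlinarith [Real.sqrt_nonneg β]
      have h2 : 0 ≤ Real.sqrt γ := Real.sqrt_nonneg γ
      rw [max_eq_left (by linarith), max_eq_left (by linarith)]

lemma keyCharpoly (ρ : Matrix (Fin 2 × Fin 2) (Fin 2 × Fin 2) ℂ) (b p q r : ℝ)
    (hρ : ρ = blk !![(b:ℂ),0;0,(b:ℂ)] !![(p:ℂ),(q:ℂ);(q:ℂ),(r:ℂ)])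
    (hpr : p * r = q * q) :
    (ρ * spinFlip ρ).charpoly =
      (X - C ((b*b : ℝ) : ℂ)) * (X - C ((b*b : ℝ) : ℂ)) *
        (X^2 - C ((2*p*r + 2*q*q : ℝ) : ℂ) * X) := by
  rw [hρ, spinFlip_blk_real, blk_mul]
  have hA : (!![(b:ℂ),0;0,(b:ℂ)] * !![(b:ℂ),0;0,(b:ℂ)])
      = !![((b*b:ℝ):ℂ),0;0,((b*b:ℝ):ℂ)] := by
    rw [Matrix.mul_fin_two]; congr 1 <;> push_cast <;> ring
  have hB : (!![(p:ℂ),(q:ℂ);(q:ℂ),(r:ℂ)] * !![(r:ℂ),(q:ℂ);(q:ℂ),(p:ℂ)])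
      = !![((p*r+q*q:ℝ):ℂ),((p*q+q*p:ℝ):ℂ);((q*r+r*q:ℝ):ℂ),((q*q+r*p:ℝ):ℂ)] := by
    rw [Matrix.mul_fin_two]; congr 1 <;> push_cast <;> ring
  rw [hA, hB, charpoly_blk]
  have hpr' : (p:ℂ) * r = (q:ℂ) * q := by exact_mod_cast congrArg (Complex.ofReal) hpr
  have h1 : ((p*r+q*q:ℝ):ℂ) + ((q*q+r*p:ℝ):ℂ) = ((2*p*r + 2*q*q : ℝ) : ℂ) := by
    push_cast; ring
  have h2 : ((p*r+q*q:ℝ):ℂ) * ((q*q+r*p:ℝ):ℂ) - ((p*q+q*p:ℝ):ℂ) * ((q*r+r*q:ℝ):ℂ) = 0 := by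
    push_cast
    linear_combination ((p:ℂ)*r - (q:ℂ)*q) * hpr'
  rw [h1, h2, map_zero, add_zero]

end Aux

/-- The concurrence of the filtered Gisin state equals
max{0, (λ sin 2θ - (1-λ))/(λ sin 2θ + 1 - λ)}, and it is at least the concurrence
max{0, λ sin 2θ + λ - 1} of the unfiltered Gisin state. -/
theorem filtered_gisin_concurrence (lam θ : ℝ) (hlam : 0 ≤ lam ∧ lam ≤ 1)
    (hθ : 0 < θ ∧ θ < Real.pi / 2) :
    ConcurrenceEq (filteredGisin lam θ)
      (max 0 ((lam * Real.sin (2*θ) - (1 - lam)) / (lam * Real.sin (2*θ) + 1 - lam))) ∧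
    ConcurrenceEq (gisinState lam θ) (max 0 (lam * Real.sin (2*θ) + lam - 1)) ∧
    max 0 (lam * Real.sin (2*θ) + lam - 1) ≤
      max 0 ((lam * Real.sin (2*θ) - (1 - lam)) / (lam * Real.sin (2*θ) + 1 - lam)) := by
  obtain ⟨hl0, hl1⟩ := hlam
  have hsin : 0 < Real.sin (2*θ) := by
    apply Real.sin_pos_of_pos_of_lt_pi <;> [linarith [hθ.1]; linarith [hθ.2, Real.pi_pos]]
  have hsin1 : Real.sin (2*θ) ≤ 1 := Real.sin_le_one _
  have hs0 : 0 ≤ lam * Real.sin (2*θ) := mul_nonneg hl0 hsin.le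
  have hN : 0 < 1 - lam + lam * Real.sin (2*θ) := by
    rcases eq_or_lt_of_le hl1 with h | h
    · subst h; simpa using hsin
    · nlinarith
  set S := Real.sin (2*θ) with hS
  set N := 1 - lam + lam * S with hNdef
  have hNe : N ≠ 0 := ne_of_gt hN
  have hb0 : 0 ≤ (1-lam)/(2*N) := div_nonneg (by linarith) (by linarith)
  have hc0 : 0 ≤ lam * S/(2*N) := div_nonneg hs0 (by linarith)
  refine ⟨?_, ?_, ?_⟩
  · have hcp := keyCharpoly (filteredGisin lam θ) ((1-lam)/(2*N)) (lam*S/(2*N))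
      (lam*S/(2*N)) (lam*S/(2*N)) (filteredGisin_eq lam θ hNe) (by ring)
    have hc := concEq_of (filteredGisin lam θ) _ _
      (mul_self_nonneg _) (by nlinarith [mul_nonneg hc0 hc0]) hcp
    have hval : max 0 (Real.sqrt (2*(lam*S/(2*N))*(lam*S/(2*N)) + 2*(lam*S/(2*N))*(lam*S/(2*N)))
          - 2 * Real.sqrt ((1-lam)/(2*N) * ((1-lam)/(2*N))))
        = max 0 ((lam * S - (1 - lam)) / (lam * S + 1 - lam)) := by
      rw [show 2*(lam*S/(2*N))*(lam*S/(2*N)) + 2*(lam*S/(2*N))*(lam*S/(2*N))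
          = (lam*S/N) * (lam*S/N) by field_simp; ring]
      rw [Real.sqrt_mul_self (div_nonneg hs0 hN.le), Real.sqrt_mul_self hb0]
      congr 1
      rw [show lam * S + 1 - lam = N by rw [hNdef]; ring]
      field_simp
    rw [hval] at hc
    exact hc
  · have hcp := keyCharpoly (gisinState lam θ) ((1-lam)/2) (lam*(Real.sin θ * Real.sin θ))
      (lam*(Real.sin θ * Real.cos θ)) (lam*(Real.cos θ * Real.cos θ))
      (gisinState_eq lam θ) (by ring)
    have hc := concEq_of (gisinState lam θ) _ _
      (mul_self_nonneg _) (by nlinarith [sq_nonneg (lam*(Real.sin θ * Real.cos θ))]) hcp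
    have hval : max 0 (Real.sqrt (2*(lam*(Real.sin θ * Real.sin θ))*(lam*(Real.cos θ * Real.cos θ))
            + 2*(lam*(Real.sin θ * Real.cos θ))*(lam*(Real.sin θ * Real.cos θ)))
          - 2 * Real.sqrt ((1-lam)/2 * ((1-lam)/2)))
        = max 0 (lam * S + lam - 1) := by
      rw [show 2*(lam*(Real.sin θ * Real.sin θ))*(lam*(Real.cos θ * Real.cos θ))
            + 2*(lam*(Real.sin θ * Real.cos θ))*(lam*(Real.sin θ * Real.cos θ))
          = (lam*S) * (lam*S) by rw [hS, Real.sin_two_mul]; ring]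
      rw [Real.sqrt_mul_self hs0, Real.sqrt_mul_self (by linarith : (0:ℝ) ≤ (1-lam)/2)]
      congr 1
      ring
    rw [hval] at hc
    exact hc
  · rcases le_or_gt (lam * S + lam - 1) 0 with h | h
    · rw [max_eq_left h]
      exact le_max_left _ _
    · have hNpos : 0 < lam * S + 1 - lam := by linarith
      have hx : lam * S - (1 - lam) = lam * S + lam - 1 := by ring
      have hle : lam * S + lam - 1 ≤ (lam * S - (1 - lam)) / (lam * S + 1 - lam) := by
        rw [hx, le_div_iff₀ hNpos]
        exact mul_le_of_le_one_right h.le (by nlinarith)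
      calc max 0 (lam * S + lam - 1) = lam * S + lam - 1 := max_eq_right h.le
        _ ≤ (lam * S - (1 - lam)) / (lam * S + 1 - lam) := hle
        _ ≤ max 0 _ := le_max_right _ _

end
end

section
/- The state ρ_V(ν) = ν ρ_V + (1-ν) ρ_top, where ρ_V = (1/4)[I₄ + (1/2)(σ_z⊗I + I⊗σ_z) + (1/2)(σ_x⊗σ_x + σ_y⊗σ_y)] and ρ_top = (|00⟩⟨00|+|11⟩⟨11|)/2, has partial-transpose eigenvalues ν/4 (twice) and (2 - ν(1±√2))/4; consequently ρ_V(ν) is entangled (has non-positive partial transpose) if and only if ν > 2(√2 - 1). -/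
open Matrix Kronecker Complex
open scoped ComplexOrder

noncomputable section

/-- The maximally entangled mixed state ρ_V. -/
def rhoV : Matrix (Fin 2 × Fin 2) (Fin 2 × Fin 2) ℂ :=
  (1/4 : ℂ) • ((1 : Matrix (Fin 2 × Fin 2) (Fin 2 × Fin 2) ℂ) +
    (1/2 : ℂ) • (pauli 2 ⊗ₖ (1 : Matrix (Fin 2) (Fin 2) ℂ) +
                 (1 : Matrix (Fin 2) (Fin 2) ℂ) ⊗ₖ pauli 2) +
    (1/2 : ℂ) • (pauli 0 ⊗ₖ pauli 0 + pauli 1 ⊗ₖ pauli 1))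

/-- The line of states ρ_V(ν) = ν ρ_V + (1-ν) ρ_top. -/
def rhoVnu (ν : ℝ) : Matrix (Fin 2 × Fin 2) (Fin 2 × Fin 2) ℂ :=
  (ν : ℂ) • rhoV + ((1 - ν : ℝ) : ℂ) • rhoTop

/-!
Reindexed by `Fin 4`, the partial transpose of ρ_V(ν) is supported on the diagonal and the
antidiagonal: it is ν/4 on |01⟩, |10⟩ and the block [[1/2, ν/4], [ν/4, (1-ν)/2]] on |00⟩, |11⟩.
Its characteristic polynomial is therefore (X - ν/4)² times a quadratic with roots
(2 - ν(1 ± √2))/4 (Vieta, using √2² = 2), and the eigenvalue multiset of a Hermitian matrix is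
the root multiset of its characteristic polynomial. Positivity fails exactly when
2 - ν(1 + √2) < 0, i.e. ν > 2/(1 + √2) = 2(√2 - 1).
-/

open Polynomial

namespace Matrix.IsHermitian

variable {n : Type*} [Fintype n] [DecidableEq n] {A : Matrix n n ℂ}

theorem eigenvalues_multiset_eq_of_charpoly (hA : A.IsHermitian) {s : Multiset ℝ}
    (h : A.charpoly = (s.map fun x : ℝ => X - C (x : ℂ)).prod) :
    Finset.univ.val.map hA.eigenvalues = s := by
  apply Multiset.map_injective Complex.ofReal_injective
  have hroots : A.charpoly.roots = s.map ((↑) : ℝ → ℂ) := by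
    rw [h, ← roots_multiset_prod_X_sub_C (s.map ((↑) : ℝ → ℂ)), Multiset.map_map]
    rfl
  simpa [hroots, Multiset.map_map] using hA.roots_charpoly_eq_eigenvalues.symm

theorem posSemidef_iff_forall_mem_eigenvalues (hA : A.IsHermitian) :
    A.PosSemidef ↔ ∀ x ∈ Finset.univ.val.map hA.eigenvalues, 0 ≤ x := by
  simp [hA.posSemidef_iff_eigenvalues_nonneg, Pi.le_def]

end Matrix.IsHermitian

theorem X_sub_C_mul_X_sub_C_sub_C_eq {R : Type*} [CommRing R] {a d e r s : R}
    (hsum : r + s = a + d) (hprod : r * s = a * d - e) :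
    (X - C a) * (X - C d) - C e = (X - C r) * (X - C s) := by
  have hsum' := congrArg C hsum
  have hprod' := congrArg C hprod
  simp only [map_add, map_mul, map_sub] at hsum' hprod'
  linear_combination X * hsum' - hprod'

theorem charpoly_fin_four_cross {R : Type*} [CommRing R] (a b c d : R) :
    (!![a, 0, 0, b; 0, c, 0, 0; 0, 0, c, 0; b, 0, 0, d]).charpoly =
      (X - C c) * (X - C c) * ((X - C a) * (X - C d) - C (b * b)) := by
  rw [Matrix.charpoly, Matrix.det_succ_row_zero, Fin.sum_univ_four]
  simp [det_fin_three, Fin.succAbove]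
  ring

theorem reindex_ptransposeB_rhoVnu (ν : ℝ) :
    reindex finProdFinEquiv finProdFinEquiv (ptransposeB (rhoVnu ν)) =
      !![1/2, 0, 0, (ν : ℂ)/4; 0, (ν : ℂ)/4, 0, 0; 0, 0, (ν : ℂ)/4, 0;
        (ν : ℂ)/4, 0, 0, (1 - ν)/2] := by
  ext i j
  fin_cases i <;> fin_cases j <;>
    norm_num [ptransposeB, rhoVnu, rhoV, rhoTop, pauli, Matrix.one_apply,
      finProdFinEquiv, Fin.divNat, Fin.modNat, Fin.ext_iff, Prod.ext_iff] <;> ring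

theorem isHermitian_ptransposeB_rhoVnu (ν : ℝ) : (ptransposeB (rhoVnu ν)).IsHermitian := by
  rw [← isHermitian_submatrix_equiv finProdFinEquiv.symm]
  change (reindex finProdFinEquiv finProdFinEquiv _).IsHermitian
  rw [reindex_ptransposeB_rhoVnu]
  ext i j
  fin_cases i <;> fin_cases j <;> simp [Complex.conj_ofReal]

theorem charpoly_ptransposeB_rhoVnu (ν : ℝ) :
    (ptransposeB (rhoVnu ν)).charpoly =
      (X - C (ν / 4 : ℂ)) * (X - C (ν / 4 : ℂ)) *
        ((X - C ((2 - ν * (1 + √2)) / 4 : ℂ)) * (X - C ((2 - ν * (1 - √2)) / 4 : ℂ))) := by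
  have hsqrt : (√2 : ℂ) * √2 = 2 := by exact_mod_cast Real.mul_self_sqrt zero_le_two
  rw [← charpoly_reindex finProdFinEquiv, reindex_ptransposeB_rhoVnu, charpoly_fin_four_cross]
  congr 1
  apply X_sub_C_mul_X_sub_C_sub_C_eq
  · ring
  · linear_combination (-(ν : ℂ) ^ 2 / 16) * hsqrt

theorem eigenvalues_ptransposeB_rhoVnu (ν : ℝ) (h : (ptransposeB (rhoVnu ν)).IsHermitian) :
    Finset.univ.val.map h.eigenvalues =
      (ν/4) ::ₘ (ν/4) ::ₘ ((2 - ν*(1 + √2))/4) ::ₘ {((2 - ν*(1 - √2))/4)} := by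
  apply h.eigenvalues_multiset_eq_of_charpoly
  rw [charpoly_ptransposeB_rhoVnu]
  simp [mul_assoc]

theorem ppt_spectrum_nonneg_iff {ν : ℝ} (hν : 0 ≤ ν) :
    (0 ≤ ν/4 ∧ 0 ≤ ν/4 ∧ 0 ≤ (2 - ν*(1 + √2))/4 ∧ 0 ≤ (2 - ν*(1 - √2))/4) ↔
      ν ≤ 2 * (√2 - 1) := by
  have hsqrt : √2 * √2 = 2 := Real.mul_self_sqrt zero_le_two
  have hone : 1 ≤ √2 := by nlinarith [Real.sqrt_nonneg 2]
  constructor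
  · rintro ⟨-, -, h, -⟩
    nlinarith
  · intro h
    exact ⟨by positivity, by positivity, by nlinarith, by nlinarith⟩

/-- The partial transpose of ρ_V(ν) has eigenvalues ν/4 (twice) and (2 - ν(1±√2))/4;
consequently ρ_V(ν) is entangled iff ν > 2(√2 - 1). -/
theorem rhoVnu_ppt_spectrum_and_entanglement (ν : ℝ) (hν : 0 ≤ ν ∧ ν ≤ 1) :
    (∀ h : (ptransposeB (rhoVnu ν)).IsHermitian,
      Finset.univ.val.map h.eigenvalues =
        (ν/4) ::ₘ (ν/4) ::ₘ ((2 - ν*(1 + Real.sqrt 2))/4) ::ₘ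
          {((2 - ν*(1 - Real.sqrt 2))/4)}) ∧
    (¬ (ptransposeB (rhoVnu ν)).PosSemidef ↔ 2 * (Real.sqrt 2 - 1) < ν) := by
  have hM := isHermitian_ptransposeB_rhoVnu ν
  refine ⟨eigenvalues_ptransposeB_rhoVnu ν, ?_⟩
  rw [← not_le, not_iff_not, hM.posSemidef_iff_forall_mem_eigenvalues,
    eigenvalues_ptransposeB_rhoVnu, ← ppt_spectrum_nonneg_iff hν.1]
  simp only [Multiset.forall_mem_cons, Multiset.mem_singleton, forall_eq]

end
end
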